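/- arXiv:2101.06725 — 12 statements merged into one kernel-verified Lean document; each statement's English description precedes it below -/
import Mathlib

section
/- Let T be a bounded linear operator on a complex Hilbert space H with closed range. If there exists a bijective bounded operator P on H with T* = P T, then T is EP (range T = range T*). -/
/-!
Since `P` is injective, `T* = P T` gives `ker T* = ker T`, and since `P` is a homeomorphism,
`range T* = P (range T)` is closed. For closed ranges, `range T = (ker T*)ᗮ` and
`range T* = (ker T)ᗮ`, so the two ranges coincide.
-/

open ContinuousLinearMap

section Composition

variable {R E F G : Type*} [Semiring R] [TopologicalSpace E] [AddCommMonoid E] [Module R E]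
  [TopologicalSpace F] [AddCommMonoid F] [Module R F] [TopologicalSpace G] [AddCommMonoid G]
  [Module R G]

theorem ContinuousLinearEquiv.ker_comp (P : F ≃L[R] G) (T : E →L[R] F) :
    ((P : F →L[R] G) ∘L T : E →ₗ[R] G).ker = (T : E →ₗ[R] F).ker :=
  LinearEquiv.ker_comp (P : F ≃ₗ[R] G) (T : E →ₗ[R] F)

theorem ContinuousLinearEquiv.isClosed_range_comp (P : F ≃L[R] G) {T : E →L[R] F}
    (hT : IsClosed ((T : E →ₗ[R] F).range : Set F)) :
    IsClosed (((P : F →L[R] G) ∘L T : E →ₗ[R] G).range : Set G) := by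
  rw [toLinearMap_comp, LinearMap.range_comp, Submodule.map_coe]
  exact P.isClosed_image.mpr hT

end Composition

theorem ContinuousLinearMap.range_eq_range_adjoint_of_ker_adjoint_eq {𝕜 E : Type*} [RCLike 𝕜]
    [NormedAddCommGroup E] [InnerProductSpace 𝕜 E] [CompleteSpace E] {T : E →L[𝕜] E}
    (hT : IsClosed ((T : E →ₗ[𝕜] E).range : Set E))
    (hT' : IsClosed ((adjoint T : E →ₗ[𝕜] E).range : Set E))
    (hker : (adjoint T : E →ₗ[𝕜] E).ker = (T : E →ₗ[𝕜] E).ker) :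
    (T : E →ₗ[𝕜] E).range = (adjoint T : E →ₗ[𝕜] E).range :=
  calc (T : E →ₗ[𝕜] E).range
      = (adjoint (adjoint T) : E →ₗ[𝕜] E).range.topologicalClosure := by
        rw [adjoint_adjoint, hT.submodule_topologicalClosure_eq]
    _ = (adjoint T : E →ₗ[𝕜] E).kerᗮ := (orthogonal_ker _).symm
    _ = (T : E →ₗ[𝕜] E).kerᗮ := by rw [hker]
    _ = (adjoint T : E →ₗ[𝕜] E).range := by
        rw [orthogonal_ker, hT'.submodule_topologicalClosure_eq]

/-- If there is a bijective bounded operator `P` (with bounded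
inverse) such that `T* = P T`, then `T` is EP. -/
theorem stmt_3 {H : Type*} [NormedAddCommGroup H] [InnerProductSpace ℂ H]
    [CompleteSpace H] (T : H →L[ℂ] H)
    (hclosed : IsClosed (LinearMap.range (T : H →ₗ[ℂ] H) : Set H))
    (hP : ∃ P : H ≃L[ℂ] H,
      ContinuousLinearMap.adjoint T = (P : H →L[ℂ] H) ∘L T) :
    LinearMap.range (T : H →ₗ[ℂ] H) = LinearMap.range ((ContinuousLinearMap.adjoint T : H →L[ℂ] H) : H →ₗ[ℂ] H) := by
  obtain ⟨P, hPT⟩ := hP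
  have hker : (adjoint T : H →ₗ[ℂ] H).ker = (T : H →ₗ[ℂ] H).ker := by
    rw [hPT]
    exact P.ker_comp T
  have hclosed' : IsClosed ((adjoint T : H →ₗ[ℂ] H).range : Set H) := by
    rw [hPT]
    exact P.isClosed_range_comp hclosed
  exact range_eq_range_adjoint_of_ker_adjoint_eq hclosed hclosed' hker
end

section
/- Let T be an EP operator on a complex Hilbert space H and A a bounded operator on H. If A T = T A, then A T† = T† A. -/
/-!
An EP operator `T` satisfies `T T† T = T`, `T† T T† = T†` and `T T† = T† T`, so `T†` is the group
inverse of `T` and the statement is purely multiplicative. If `a` commutes with `t`, it commutes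
with the idempotent `p = t s`, because `a p = p a p = p a` (using `p t = t = t p`); then
`a s = a p s = p a s = s a p = s a`.
-/

namespace Commute

variable {S : Type*} [Semigroup S] {t s a : S}

theorem mul_right_of_mul_mul_eq (hts : t * s * t = t) (hst : Commute t s) (ha : Commute a t) :
    Commute a (t * s) := by
  have htst : t * (s * t) = t := by rw [← mul_assoc, hts]
  have hleft : a * (t * s) = t * s * a * (t * s) := calc
    a * (t * s) = t * a * s := by rw [← mul_assoc, ha.eq]
    _ = t * s * (t * a) * s := by rw [← mul_assoc, hts]
    _ = t * s * a * (t * s) := by rw [← ha.eq]; simp only [mul_assoc]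
  have hright : t * s * a = t * s * a * (t * s) := calc
    t * s * a = s * (a * t) := by rw [hst.eq, mul_assoc, ha.eq]
    _ = s * (a * (t * (s * t))) := by rw [htst]
    _ = s * t * a * (s * t) := by rw [← mul_assoc a t, ha.eq]; simp only [mul_assoc]
    _ = t * s * a * (t * s) := by rw [← hst.eq]
  exact hleft.trans hright.symm

theorem of_group_inverse (hts : t * s * t = t) (hst : s * t * s = s) (hcomm : Commute t s)
    (ha : Commute a t) : Commute a s := by
  have hp : Commute a (t * s) := mul_right_of_mul_mul_eq hts hcomm ha
  calc a * s = a * (t * s) * s := by rw [mul_assoc, hcomm.eq, hst]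
    _ = t * s * (a * s) := by rw [hp.eq, mul_assoc]
    _ = s * (t * a) * s := by rw [hcomm.eq]; simp only [mul_assoc]
    _ = s * (a * (t * s)) := by rw [← ha.eq]; simp only [mul_assoc]
    _ = s * a := by rw [hp.eq, ← mul_assoc, ← mul_assoc, hst]

end Commute

theorem stmt_8_general {H : Type*} [NormedAddCommGroup H] [InnerProductSpace ℂ H]
    (T Tdag A : H →L[ℂ] H)
    (h1 : T ∘L Tdag ∘L T = T) (h2 : Tdag ∘L T ∘L Tdag = Tdag)
    (hEP : T ∘L Tdag = Tdag ∘L T)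
    (hc : A ∘L T = T ∘L A) :
    A ∘L Tdag = Tdag ∘L A :=
  Commute.of_group_inverse ((mul_assoc T Tdag T).trans h1) ((mul_assoc Tdag T Tdag).trans h2)
    hEP hc

/-- If `T` is an EP operator (with Moore-Penrose inverse `Tdag` and
`T T† = T† T`) and `A T = T A`, then `A T† = T† A`. -/
theorem stmt_8 {H : Type*} [NormedAddCommGroup H] [InnerProductSpace ℂ H]
    [CompleteSpace H] (T Tdag A : H →L[ℂ] H)
    (h1 : T ∘L Tdag ∘L T = T) (h2 : Tdag ∘L T ∘L Tdag = Tdag)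
    (h3 : ContinuousLinearMap.adjoint (T ∘L Tdag) = T ∘L Tdag)
    (h4 : ContinuousLinearMap.adjoint (Tdag ∘L T) = Tdag ∘L T)
    (hEP : T ∘L Tdag = Tdag ∘L T)
    (hc : A ∘L T = T ∘L A) :
    A ∘L Tdag = Tdag ∘L A :=
  stmt_8_general T Tdag A h1 h2 hEP hc
end

section
/- Let T be an EP operator on a complex Hilbert space H and A a bounded operator on H. If A T = T A and A T* T = T* T A, then A T* = T* A. -/
/-! With `P = T T†`, the identities `T T† T = T` and `T T† = T† T` give `P A = P A P = A P`,
and `P` is self-adjoint, so `T* P = (P T)* = T*`. Hence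
`A T* = A T* T T† = T* T A T† = T* A P = T* P A = T* A`. -/

section Semigroup

variable {R : Type*} [Semigroup R] {a t d : R}

theorem Commute.mul_right_of_commuting_inner_inverse (ha : Commute a t) (htdt : t * d * t = t)
    (hEP : Commute t d) : Commute a (t * d) := by
  have hright : a * (t * d) = t * d * a * (t * d) := calc
    a * (t * d) = t * (a * d) := ha.left_comm d
    _ = t * d * t * (a * d) := by rw [htdt]
    _ = t * d * a * (t * d) := by simp only [mul_assoc, ha.left_comm]
  have hleft : t * d * a = t * d * a * (t * d) := calc
    t * d * a = d * a * t := by rw [hEP.eq, mul_assoc, mul_assoc, ha.eq]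
    _ = d * a * (t * d * t) := by rw [htdt]
    _ = t * d * a * (t * d) := by
      simp only [mul_assoc, hEP.symm.eq, ha.left_comm, hEP.symm.left_comm]
  exact hright.trans hleft.symm

variable [StarMul R]

theorem star_mul_mul_eq_star_of_isSelfAdjoint (htdt : t * d * t = t)
    (hP : IsSelfAdjoint (t * d)) : star t * (t * d) = star t := by
  conv_rhs => rw [← htdt, star_mul, hP.star_eq]

theorem Commute.star_right_of_star_mul_self (ha : Commute a t)
    (ha' : Commute a (star t * t)) (htdt : t * d * t = t)
    (hP : IsSelfAdjoint (t * d)) (hEP : Commute t d) : Commute a (star t) := by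
  have hstar := star_mul_mul_eq_star_of_isSelfAdjoint htdt hP
  have haP := ha.mul_right_of_commuting_inner_inverse htdt hEP
  calc a * star t = a * (star t * t) * d := by rw [mul_assoc, mul_assoc, hstar]
    _ = star t * (t * a * d) := by rw [ha'.eq]; simp only [mul_assoc]
    _ = star t * (t * d * a) := by rw [← ha.eq, mul_assoc, haP.eq]
    _ = star t * a := by rw [← mul_assoc, hstar]

end Semigroup

theorem stmt_9_general {H : Type*} [NormedAddCommGroup H] [InnerProductSpace ℂ H]
    [CompleteSpace H] (T Tdag A : H →L[ℂ] H)
    (h1 : T ∘L Tdag ∘L T = T)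
    (h3 : ContinuousLinearMap.adjoint (T ∘L Tdag) = T ∘L Tdag)
    (hEP : T ∘L Tdag = Tdag ∘L T)
    (hc : A ∘L T = T ∘L A)
    (hc2 : A ∘L (ContinuousLinearMap.adjoint T ∘L T)
         = (ContinuousLinearMap.adjoint T ∘L T) ∘L A) :
    A ∘L ContinuousLinearMap.adjoint T = ContinuousLinearMap.adjoint T ∘L A := by
  simp only [← ContinuousLinearMap.star_eq_adjoint] at h3 hc2 ⊢
  exact Commute.star_right_of_star_mul_self hc hc2 (by rw [mul_assoc]; exact h1) h3 hEP

/-- If `T` is EP, `A T = T A` and `A T* T = T* T A`, then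
`A T* = T* A`. -/
theorem stmt_9 {H : Type*} [NormedAddCommGroup H] [InnerProductSpace ℂ H]
    [CompleteSpace H] (T Tdag A : H →L[ℂ] H)
    (h1 : T ∘L Tdag ∘L T = T) (h2 : Tdag ∘L T ∘L Tdag = Tdag)
    (h3 : ContinuousLinearMap.adjoint (T ∘L Tdag) = T ∘L Tdag)
    (h4 : ContinuousLinearMap.adjoint (Tdag ∘L T) = Tdag ∘L T)
    (hEP : T ∘L Tdag = Tdag ∘L T)
    (hc : A ∘L T = T ∘L A)
    (hc2 : A ∘L (ContinuousLinearMap.adjoint T ∘L T)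
         = (ContinuousLinearMap.adjoint T ∘L T) ∘L A) :
    A ∘L ContinuousLinearMap.adjoint T = ContinuousLinearMap.adjoint T ∘L A :=
  stmt_9_general T Tdag A h1 h3 hEP hc hc2
end

section
/- Let T be an EP operator on a complex Hilbert space H and A a bounded operator on H. If A T = T A and A T† T* = T† T* A, then A T* = T* A. -/
theorem Commute.of_mul_mul_eq {M : Type*} [Semigroup M] {a t d s : M} (hs : t * d * s = s)
    (ht : Commute a t) (hds : Commute a (d * s)) : Commute a s := by
  rw [← hs, mul_assoc]
  exact ht.mul_right hds

theorem mul_mul_star_eq_star_of_mul_mul_eq {M : Type*} [Monoid M] [StarMul M] {t d : M}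
    (h : t * d * t = t) (hdt : IsSelfAdjoint (d * t)) : d * t * star t = star t := by
  conv_rhs => rw [← h, mul_assoc, star_mul, hdt.star_eq]

theorem stmt_10_general {H : Type*} [NormedAddCommGroup H] [InnerProductSpace ℂ H]
    [CompleteSpace H] (T Tdag A : H →L[ℂ] H)
    (h1 : T ∘L Tdag ∘L T = T)
    (h4 : ContinuousLinearMap.adjoint (Tdag ∘L T) = Tdag ∘L T)
    (hEP : T ∘L Tdag = Tdag ∘L T)
    (hc : A ∘L T = T ∘L A)
    (hc2 : A ∘L (Tdag ∘L ContinuousLinearMap.adjoint T)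
         = (Tdag ∘L ContinuousLinearMap.adjoint T) ∘L A) :
    A ∘L ContinuousLinearMap.adjoint T = ContinuousLinearMap.adjoint T ∘L A := by
  simp only [← ContinuousLinearMap.star_eq_adjoint, ← ContinuousLinearMap.mul_def] at *
  have hrange : T * Tdag * star T = star T := by
    rw [hEP]
    exact mul_mul_star_eq_star_of_mul_mul_eq (by rw [mul_assoc, h1]) h4
  exact Commute.of_mul_mul_eq hrange hc hc2

/-- If `T` is EP, `A T = T A` and `A T† T* = T† T* A`, then
`A T* = T* A`. -/
theorem stmt_10 {H : Type*} [NormedAddCommGroup H] [InnerProductSpace ℂ H]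
    [CompleteSpace H] (T Tdag A : H →L[ℂ] H)
    (h1 : T ∘L Tdag ∘L T = T) (h2 : Tdag ∘L T ∘L Tdag = Tdag)
    (h3 : ContinuousLinearMap.adjoint (T ∘L Tdag) = T ∘L Tdag)
    (h4 : ContinuousLinearMap.adjoint (Tdag ∘L T) = Tdag ∘L T)
    (hEP : T ∘L Tdag = Tdag ∘L T)
    (hc : A ∘L T = T ∘L A)
    (hc2 : A ∘L (Tdag ∘L ContinuousLinearMap.adjoint T)
         = (Tdag ∘L ContinuousLinearMap.adjoint T) ∘L A) :
    A ∘L ContinuousLinearMap.adjoint T = ContinuousLinearMap.adjoint T ∘L A :=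
  stmt_10_general T Tdag A h1 h4 hEP hc hc2
end

section
/- Let T and S be EP operators on a complex Hilbert space H and A a bounded operator. If A T = S A and A T* T = S* S A, then A T* = S* A. -/
/-!
Only the range projections `T T†` and `S S†` matter. Because `T` commutes with `T†`, the
intertwining `A T = S A` passes to them: `A T T† = S S† A`. Because `T T†` is self-adjoint,
`T* = T* T T†`, hence `A T* = (A T* T) T† = S* S A T† = S* (A T T†) = S* S S† A = S* A`.
Only composition and the adjoint are used, so the argument runs in any monoid with involution.
-/

theorem SemiconjBy.mul_commuting_inner_inverse {M : Type*} [Monoid M] {a t t' s s' : M}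
    (h : SemiconjBy a t s) (ht : t * t' * t = t) (htc : Commute t t')
    (hs : s * s' * s = s) (hsc : Commute s s') :
    SemiconjBy a (t * t') (s * s') := by
  have hleft : a * (t * t') = s * s' * (a * (t * t')) :=
    calc a * (t * t') = s * s' * s * a * t' := by rw [hs, ← mul_assoc, h.eq]
      _ = s * s' * (a * (t * t')) := by rw [← mul_assoc a, h.eq]; simp only [mul_assoc]
  have hright : s * s' * a = s * s' * (a * (t * t')) :=
    calc s * s' * a = s' * (a * (t * t' * t)) := by rw [ht, hsc.eq, mul_assoc, h.eq]
      _ = s' * (a * t * (t * t')) := by rw [mul_assoc t, ← htc.eq]; simp only [mul_assoc]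
      _ = s * s' * (a * (t * t')) := by rw [h.eq, hsc.eq]; simp only [mul_assoc]
  exact hleft.trans hright.symm

theorem star_mul_mul_inner_inverse {R : Type*} [Monoid R] [StarMul R] {t t' : R}
    (ht : t * t' * t = t) (hproj : IsSelfAdjoint (t * t')) :
    star t * (t * t') = star t := by
  conv_rhs => rw [← ht, star_mul, hproj.star_eq]

theorem SemiconjBy.star_of_star_mul_self {R : Type*} [Monoid R] [StarMul R]
    {a t t' s s' : R} (h : SemiconjBy a t s) (hstar : SemiconjBy a (star t * t) (star s * s))
    (ht : t * t' * t = t) (htproj : IsSelfAdjoint (t * t')) (htc : Commute t t')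
    (hs : s * s' * s = s) (hsproj : IsSelfAdjoint (s * s')) (hsc : Commute s s') :
    SemiconjBy a (star t) (star s) :=
  calc a * star t = a * (star t * t) * t' := by
        rw [mul_assoc, mul_assoc, star_mul_mul_inner_inverse ht htproj]
    _ = star s * (s * a * t') := by rw [hstar.eq]; simp only [mul_assoc]
    _ = star s * (s * s') * a := by
        rw [← h.eq, mul_assoc, (h.mul_commuting_inner_inverse ht htc hs hsc).eq]
        simp only [mul_assoc]
    _ = star s * a := by rw [star_mul_mul_inner_inverse hs hsproj]

theorem stmt_11_general {H : Type*} [NormedAddCommGroup H] [InnerProductSpace ℂ H]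
    [CompleteSpace H] (T Tdag S Sdag A : H →L[ℂ] H)
    (hT1 : T ∘L Tdag ∘L T = T)
    (hT3 : ContinuousLinearMap.adjoint (T ∘L Tdag) = T ∘L Tdag)
    (hTEP : T ∘L Tdag = Tdag ∘L T)
    (hS1 : S ∘L Sdag ∘L S = S)
    (hS3 : ContinuousLinearMap.adjoint (S ∘L Sdag) = S ∘L Sdag)
    (hSEP : S ∘L Sdag = Sdag ∘L S)
    (hc : A ∘L T = S ∘L A)
    (hc2 : A ∘L (ContinuousLinearMap.adjoint T ∘L T)
         = (ContinuousLinearMap.adjoint S ∘L S) ∘L A) :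
    A ∘L ContinuousLinearMap.adjoint T = ContinuousLinearMap.adjoint S ∘L A := by
  simp only [← ContinuousLinearMap.star_eq_adjoint, ← ContinuousLinearMap.mul_def] at *
  exact SemiconjBy.star_of_star_mul_self hc hc2 (by rw [mul_assoc, hT1]) hT3 hTEP
    (by rw [mul_assoc, hS1]) hS3 hSEP

/-- If `T, S` are EP, `A T = S A` and `A T* T = S* S A`, then
`A T* = S* A`. -/
theorem stmt_11 {H : Type*} [NormedAddCommGroup H] [InnerProductSpace ℂ H]
    [CompleteSpace H] (T Tdag S Sdag A : H →L[ℂ] H)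
    (hT1 : T ∘L Tdag ∘L T = T) (hT2 : Tdag ∘L T ∘L Tdag = Tdag)
    (hT3 : ContinuousLinearMap.adjoint (T ∘L Tdag) = T ∘L Tdag)
    (hT4 : ContinuousLinearMap.adjoint (Tdag ∘L T) = Tdag ∘L T)
    (hTEP : T ∘L Tdag = Tdag ∘L T)
    (hS1 : S ∘L Sdag ∘L S = S) (hS2 : Sdag ∘L S ∘L Sdag = Sdag)
    (hS3 : ContinuousLinearMap.adjoint (S ∘L Sdag) = S ∘L Sdag)
    (hS4 : ContinuousLinearMap.adjoint (Sdag ∘L S) = Sdag ∘L S)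
    (hSEP : S ∘L Sdag = Sdag ∘L S)
    (hc : A ∘L T = S ∘L A)
    (hc2 : A ∘L (ContinuousLinearMap.adjoint T ∘L T)
         = (ContinuousLinearMap.adjoint S ∘L S) ∘L A) :
    A ∘L ContinuousLinearMap.adjoint T = ContinuousLinearMap.adjoint S ∘L A :=
  stmt_11_general T Tdag S Sdag A hT1 hT3 hTEP hS1 hS3 hSEP hc hc2
end

section
/- Let T and S be EP operators on a complex Hilbert space H and A a bounded operator. If A T = S A and A T† T* = S† S* A, then A T* = S* A. -/
open ContinuousLinearMap

theorem ContinuousLinearMap.comp_comp_adjoint_eq_adjoint_of_commute {𝕜 E : Type*} [RCLike 𝕜]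
    [NormedAddCommGroup E] [InnerProductSpace 𝕜 E] [CompleteSpace E] {T Tdag : E →L[𝕜] E}
    (h1 : T ∘L Tdag ∘L T = T) (h3 : adjoint (T ∘L Tdag) = T ∘L Tdag)
    (hEP : T ∘L Tdag = Tdag ∘L T) :
    T ∘L (Tdag ∘L adjoint T) = adjoint T := by
  have hT : T ∘L (T ∘L Tdag) = T := by rw [hEP, h1]
  simpa only [adjoint_comp, h3, comp_assoc] using congrArg adjoint hT

theorem stmt_12_general {H : Type*} [NormedAddCommGroup H] [InnerProductSpace ℂ H]
    [CompleteSpace H] (T Tdag S Sdag A : H →L[ℂ] H)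
    (hT1 : T ∘L Tdag ∘L T = T)
    (hT3 : ContinuousLinearMap.adjoint (T ∘L Tdag) = T ∘L Tdag)
    (hTEP : T ∘L Tdag = Tdag ∘L T)
    (hS1 : S ∘L Sdag ∘L S = S)
    (hS3 : ContinuousLinearMap.adjoint (S ∘L Sdag) = S ∘L Sdag)
    (hSEP : S ∘L Sdag = Sdag ∘L S)
    (hc : A ∘L T = S ∘L A)
    (hc2 : A ∘L (Tdag ∘L ContinuousLinearMap.adjoint T)
         = (Sdag ∘L ContinuousLinearMap.adjoint S) ∘L A) :
    A ∘L ContinuousLinearMap.adjoint T = ContinuousLinearMap.adjoint S ∘L A :=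
  calc A ∘L adjoint T
      = (A ∘L T) ∘L (Tdag ∘L adjoint T) := by
        rw [comp_assoc, comp_comp_adjoint_eq_adjoint_of_commute hT1 hT3 hTEP]
    _ = S ∘L (Sdag ∘L adjoint S) ∘L A := by rw [hc, comp_assoc, hc2]
    _ = adjoint S ∘L A := by
        rw [← comp_assoc, comp_comp_adjoint_eq_adjoint_of_commute hS1 hS3 hSEP]

/-- If `T, S` are EP, `A T = S A` and `A T† T* = S† S* A`, then
`A T* = S* A`. -/
theorem stmt_12 {H : Type*} [NormedAddCommGroup H] [InnerProductSpace ℂ H]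
    [CompleteSpace H] (T Tdag S Sdag A : H →L[ℂ] H)
    (hT1 : T ∘L Tdag ∘L T = T) (hT2 : Tdag ∘L T ∘L Tdag = Tdag)
    (hT3 : ContinuousLinearMap.adjoint (T ∘L Tdag) = T ∘L Tdag)
    (hT4 : ContinuousLinearMap.adjoint (Tdag ∘L T) = Tdag ∘L T)
    (hTEP : T ∘L Tdag = Tdag ∘L T)
    (hS1 : S ∘L Sdag ∘L S = S) (hS2 : Sdag ∘L S ∘L Sdag = Sdag)
    (hS3 : ContinuousLinearMap.adjoint (S ∘L Sdag) = S ∘L Sdag)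
    (hS4 : ContinuousLinearMap.adjoint (Sdag ∘L S) = Sdag ∘L S)
    (hSEP : S ∘L Sdag = Sdag ∘L S)
    (hc : A ∘L T = S ∘L A)
    (hc2 : A ∘L (Tdag ∘L ContinuousLinearMap.adjoint T)
         = (Sdag ∘L ContinuousLinearMap.adjoint S) ∘L A) :
    A ∘L ContinuousLinearMap.adjoint T = ContinuousLinearMap.adjoint S ∘L A :=
  stmt_12_general T Tdag S Sdag A hT1 hT3 hTEP hS1 hS3 hSEP hc hc2
end

section
/- Let T and S be EP operators on a complex Hilbert space H and A a bounded operator. If A T = S A, then A T† = S† A. -/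
/-!
For EP operators the Moore–Penrose inverse `T†` commutes with `T`, so it is the group inverse of
`T`, and the claim is an identity about group inverses in any semigroup. From `A T = S A` one gets
`S S† A = A T T†`, and then
`A T† = A T T† T† = S S† A T† = S† S A T† = S† A T T† = S† S S† A = S† A`.
-/

structure IsGroupInverse {M : Type*} [Semigroup M] (t t' : M) : Prop where
  mul_inv_mul : t * t' * t = t
  inv_mul_inv : t' * t * t' = t'
  mul_inv_comm : t * t' = t' * t

namespace IsGroupInverse

variable {M : Type*} [Semigroup M] {t t' s s' a : M}

theorem inv_mul_mul_self (ht : IsGroupInverse t t') : t' * t * t = t := by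
  rw [← ht.mul_inv_comm, ht.mul_inv_mul]

theorem mul_mul_inv_mul_of_mul_eq_mul (ht : IsGroupInverse t t') (h : a * t = s * a) :
    s * a * (t' * t) = s * a := by
  rw [← h, mul_assoc, ← mul_assoc t, ht.mul_inv_mul]

theorem mul_inv_mul_eq_mul_mul_inv_of_mul_eq_mul (ht : IsGroupInverse t t')
    (hs : IsGroupInverse s s') (h : a * t = s * a) : s * s' * a = a * (t * t') := by
  have hat : a * (t * t') = s * (a * t') := by rw [← mul_assoc, h, mul_assoc]
  calc s * s' * a = s' * (s * a * (t' * t)) := by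
        rw [ht.mul_mul_inv_mul_of_mul_eq_mul h, hs.mul_inv_comm, mul_assoc]
    _ = s' * s * (s * (a * t')) := by rw [← ht.mul_inv_comm, mul_assoc s, hat, mul_assoc]
    _ = s * (a * t') := by rw [← mul_assoc, hs.inv_mul_mul_self]
    _ = a * (t * t') := hat.symm

theorem mul_inv_eq_inv_mul_of_mul_eq_mul (ht : IsGroupInverse t t') (hs : IsGroupInverse s s')
    (h : a * t = s * a) : a * t' = s' * a := by
  have key := ht.mul_inv_mul_eq_mul_mul_inv_of_mul_eq_mul hs h
  calc a * t' = a * (t * t') * t' := by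
        rw [mul_assoc, ht.mul_inv_comm, ht.inv_mul_inv]
    _ = s' * (s * a) * t' := by rw [← key, hs.mul_inv_comm, mul_assoc s']
    _ = s' * (a * (t * t')) := by rw [← h, mul_assoc, mul_assoc]
    _ = s' * a := by rw [← key, ← mul_assoc, ← mul_assoc, hs.inv_mul_inv]

end IsGroupInverse

theorem stmt_13_general {H : Type*} [NormedAddCommGroup H] [InnerProductSpace ℂ H]
    (T Tdag S Sdag A : H →L[ℂ] H)
    (hT1 : T ∘L Tdag ∘L T = T) (hT2 : Tdag ∘L T ∘L Tdag = Tdag)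
    (hTEP : T ∘L Tdag = Tdag ∘L T)
    (hS1 : S ∘L Sdag ∘L S = S) (hS2 : Sdag ∘L S ∘L Sdag = Sdag)
    (hSEP : S ∘L Sdag = Sdag ∘L S)
    (hc : A ∘L T = S ∘L A) :
    A ∘L Tdag = Sdag ∘L A :=
  have hT : IsGroupInverse T Tdag := ⟨(mul_assoc ..).trans hT1, (mul_assoc ..).trans hT2, hTEP⟩
  have hS : IsGroupInverse S Sdag := ⟨(mul_assoc ..).trans hS1, (mul_assoc ..).trans hS2, hSEP⟩
  hT.mul_inv_eq_inv_mul_of_mul_eq_mul hS hc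

/-- If `T, S` are EP and `A T = S A`, then `A T† = S† A`. -/
theorem stmt_13 {H : Type*} [NormedAddCommGroup H] [InnerProductSpace ℂ H]
    [CompleteSpace H] (T Tdag S Sdag A : H →L[ℂ] H)
    (hT1 : T ∘L Tdag ∘L T = T) (hT2 : Tdag ∘L T ∘L Tdag = Tdag)
    (hT3 : ContinuousLinearMap.adjoint (T ∘L Tdag) = T ∘L Tdag)
    (hT4 : ContinuousLinearMap.adjoint (Tdag ∘L T) = Tdag ∘L T)
    (hTEP : T ∘L Tdag = Tdag ∘L T)
    (hS1 : S ∘L Sdag ∘L S = S) (hS2 : Sdag ∘L S ∘L Sdag = Sdag)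
    (hS3 : ContinuousLinearMap.adjoint (S ∘L Sdag) = S ∘L Sdag)
    (hS4 : ContinuousLinearMap.adjoint (Sdag ∘L S) = Sdag ∘L S)
    (hSEP : S ∘L Sdag = Sdag ∘L S)
    (hc : A ∘L T = S ∘L A) :
    A ∘L Tdag = Sdag ∘L A :=
  stmt_13_general T Tdag S Sdag A hT1 hT2 hTEP hS1 hS2 hSEP hc
end

section
/- Let T and S be EP operators on a complex Hilbert space H and A, B bounded operators. If A T = S B and A T² = S² B, then A T† = S† B. -/
/-!
For an EP operator the Moore–Penrose inverse commutes with the operator, so it is the group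
inverse, and the statement holds for group inverses in any semigroup. Writing `t = T#`,
`s = S#`, the identities `s = s² S`, `S = s S²`, `T = T² t`, `t = T t²` let one move between
`s B` and `A t` using only `A T = S B` and `A T² = S² B`: both equal `s S B t`.
-/

structure IsGroupInverse_s14 {M : Type*} [Semigroup M] (a b : M) : Prop where
  mul_inv_mul : a * (b * a) = a
  inv_mul_inv : b * (a * b) = b
  commute : Commute a b

namespace IsGroupInverse_s14

variable {M : Type*} [Semigroup M] {a b : M}

theorem symm (h : IsGroupInverse_s14 a b) : IsGroupInverse_s14 b a :=
  ⟨h.inv_mul_inv, h.mul_inv_mul, h.commute.symm⟩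

theorem mul_self_mul (h : IsGroupInverse_s14 a b) : a * a * b = a := by
  rw [mul_assoc, h.commute.eq, h.mul_inv_mul]

theorem mul_mul_self (h : IsGroupInverse_s14 a b) : a * (b * b) = b := by
  rw [← mul_assoc, h.commute.eq, mul_assoc, h.inv_mul_inv]

theorem mul_eq_mul_of_intertwines {T t S s A B : M} (hT : IsGroupInverse_s14 T t)
    (hS : IsGroupInverse_s14 S s) (h₁ : A * T = S * B) (h₂ : A * (T * T) = S * S * B) :
    A * t = s * B :=
  calc A * t = A * T * (t * t) := by rw [mul_assoc, hT.mul_mul_self]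
    _ = s * (S * S) * B * (t * t) := by rw [h₁, hS.symm.mul_mul_self]
    _ = s * (A * (T * T) * t) * t := by rw [mul_assoc s, h₂]; simp only [mul_assoc]
    _ = s * (S * B) * t := by rw [mul_assoc A, hT.mul_self_mul, h₁]
    _ = s * (s * (S * S)) * B * t := by rw [hS.symm.mul_mul_self, mul_assoc s S B]
    _ = s * s * (A * (T * T) * t) := by rw [h₂]; simp only [mul_assoc]
    _ = s * s * (A * T) := by rw [mul_assoc A, hT.mul_self_mul]
    _ = s * B := by rw [h₁, ← mul_assoc, hS.symm.mul_self_mul]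

end IsGroupInverse_s14

theorem stmt_14_general {H : Type*} [NormedAddCommGroup H] [InnerProductSpace ℂ H]
    (T Tdag S Sdag A B : H →L[ℂ] H)
    (hT1 : T ∘L Tdag ∘L T = T) (hT2 : Tdag ∘L T ∘L Tdag = Tdag)
    (hTEP : T ∘L Tdag = Tdag ∘L T)
    (hS1 : S ∘L Sdag ∘L S = S) (hS2 : Sdag ∘L S ∘L Sdag = Sdag)
    (hSEP : S ∘L Sdag = Sdag ∘L S)
    (hc1 : A ∘L T = S ∘L B)
    (hc2 : A ∘L (T ∘L T) = (S ∘L S) ∘L B) :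
    A ∘L Tdag = Sdag ∘L B :=
  IsGroupInverse_s14.mul_eq_mul_of_intertwines ⟨hT1, hT2, hTEP⟩ ⟨hS1, hS2, hSEP⟩ hc1 hc2

/-- If `T, S` are EP, `A T = S B` and `A T² = S² B`, then
`A T† = S† B`. -/
theorem stmt_14 {H : Type*} [NormedAddCommGroup H] [InnerProductSpace ℂ H]
    [CompleteSpace H] (T Tdag S Sdag A B : H →L[ℂ] H)
    (hT1 : T ∘L Tdag ∘L T = T) (hT2 : Tdag ∘L T ∘L Tdag = Tdag)
    (hT3 : ContinuousLinearMap.adjoint (T ∘L Tdag) = T ∘L Tdag)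
    (hT4 : ContinuousLinearMap.adjoint (Tdag ∘L T) = Tdag ∘L T)
    (hTEP : T ∘L Tdag = Tdag ∘L T)
    (hS1 : S ∘L Sdag ∘L S = S) (hS2 : Sdag ∘L S ∘L Sdag = Sdag)
    (hS3 : ContinuousLinearMap.adjoint (S ∘L Sdag) = S ∘L Sdag)
    (hS4 : ContinuousLinearMap.adjoint (Sdag ∘L S) = Sdag ∘L S)
    (hSEP : S ∘L Sdag = Sdag ∘L S)
    (hc1 : A ∘L T = S ∘L B)
    (hc2 : A ∘L (T ∘L T) = (S ∘L S) ∘L B) :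
    A ∘L Tdag = Sdag ∘L B :=
  stmt_14_general T Tdag S Sdag A B hT1 hT2 hTEP hS1 hS2 hSEP hc1 hc2
end

section
/- Let T be an EP operator on a complex Hilbert space H and A, B bounded operators. If A T = T B and B T = T A, then A T† = T† B and B T† = T† A. -/
/-!
For an EP operator, `T†` is the group inverse of `T`: `T T† T = T`, `T† T T† = T†` and
`T T† = T† T`. A group inverse commutes with everything that commutes with its element.
The intertwining relations give `B T² = T A T = T² B`, so `B` commutes with `T²`, hence with
its group inverse `T†²`, and `A T† = A T T†² = T B T†² = T T†² B = T† B`.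
-/

structure IsGroupInverse_s15 {S : Type*} [Semigroup S] (t d : S) : Prop where
  mul_inv_mul : t * (d * t) = t
  inv_mul_inv : d * (t * d) = d
  commute : Commute t d

namespace IsGroupInverse_s15

variable {S : Type*} [Semigroup S] {t d : S}

theorem mul_inv_mul_mul (h : IsGroupInverse_s15 t d) (y : S) : t * (d * (t * y)) = t * y := by
  rw [← mul_assoc d, ← mul_assoc, h.mul_inv_mul]

theorem mul_inv_sq (h : IsGroupInverse_s15 t d) : t * (d * d) = d := by
  rw [← mul_assoc, h.commute.eq, mul_assoc, h.inv_mul_inv]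

theorem inv_sq_mul_mul (h : IsGroupInverse_s15 t d) (y : S) : d * (d * (t * y)) = d * y := by
  rw [← h.commute.left_comm, ← mul_assoc t, ← mul_assoc, h.inv_mul_inv]

theorem sq (h : IsGroupInverse_s15 t d) : IsGroupInverse_s15 (t * t) (d * d) where
  mul_inv_mul := by
    calc t * t * (d * d * (t * t)) = t * (d * (t * (d * (t * t)))) := by
          simp only [mul_assoc, h.commute.left_comm]
      _ = t * t := by rw [h.mul_inv_mul_mul, h.mul_inv_mul_mul]
  inv_mul_inv := by
    calc d * d * (t * t * (d * d)) = d * (d * (t * (t * (d * d)))) := by simp only [mul_assoc]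
      _ = d * d := by rw [h.mul_inv_sq, h.inv_sq_mul_mul]
  commute := (h.commute.mul_right h.commute).mul_left (h.commute.mul_right h.commute)

theorem commute_of_commute (h : IsGroupInverse_s15 t d) {x : S} (hx : Commute x t) :
    Commute x d :=
  calc x * d = t * (d * (t * (x * (d * d)))) := by
        rw [h.mul_inv_mul_mul, ← hx.left_comm, h.mul_inv_sq]
    _ = d * (x * (t * d)) := by
        rw [← hx.left_comm, h.mul_inv_sq, h.commute.left_comm, hx.left_comm]
    _ = d * (d * (t * (x * (d * t)))) := by rw [h.inv_sq_mul_mul, h.commute.eq]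
    _ = d * x := by rw [← hx.left_comm, h.mul_inv_mul, hx.eq, h.inv_sq_mul_mul]

theorem mul_eq_mul_of_intertwine (h : IsGroupInverse_s15 t d) {a b : S}
    (hab : a * t = t * b) (hba : b * t = t * a) : a * d = d * b := by
  have hb : Commute b (d * d) := by
    refine h.sq.commute_of_commute ?_
    show b * (t * t) = t * t * b
    rw [← mul_assoc, hba, mul_assoc, hab, mul_assoc]
  calc a * d = a * t * (d * d) := by rw [mul_assoc, h.mul_inv_sq]
    _ = t * (d * d) * b := by rw [hab, mul_assoc, hb.eq, ← mul_assoc]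
    _ = d * b := by rw [h.mul_inv_sq]

end IsGroupInverse_s15

theorem stmt_15_general {H : Type*} [NormedAddCommGroup H] [InnerProductSpace ℂ H]
    (T Tdag A B : H →L[ℂ] H)
    (h1 : T ∘L Tdag ∘L T = T) (h2 : Tdag ∘L T ∘L Tdag = Tdag)
    (hEP : T ∘L Tdag = Tdag ∘L T)
    (hc1 : A ∘L T = T ∘L B) (hc2 : B ∘L T = T ∘L A) :
    A ∘L Tdag = Tdag ∘L B ∧ B ∘L Tdag = Tdag ∘L A :=
  have hT : IsGroupInverse_s15 T Tdag := ⟨h1, h2, hEP⟩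
  ⟨hT.mul_eq_mul_of_intertwine hc1 hc2, hT.mul_eq_mul_of_intertwine hc2 hc1⟩

/-- If `T` is EP, `A T = T B` and `B T = T A`, then `A T† = T† B`
and `B T† = T† A`. -/
theorem stmt_15 {H : Type*} [NormedAddCommGroup H] [InnerProductSpace ℂ H]
    [CompleteSpace H] (T Tdag A B : H →L[ℂ] H)
    (h1 : T ∘L Tdag ∘L T = T) (h2 : Tdag ∘L T ∘L Tdag = Tdag)
    (h3 : ContinuousLinearMap.adjoint (T ∘L Tdag) = T ∘L Tdag)
    (h4 : ContinuousLinearMap.adjoint (Tdag ∘L T) = Tdag ∘L T)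
    (hEP : T ∘L Tdag = Tdag ∘L T)
    (hc1 : A ∘L T = T ∘L B) (hc2 : B ∘L T = T ∘L A) :
    A ∘L Tdag = Tdag ∘L B ∧ B ∘L Tdag = Tdag ∘L A :=
  stmt_15_general T Tdag A B h1 h2 hEP hc1 hc2
end

section
/- Let T and S be EP operators on a complex Hilbert space H and A, B bounded operators. If A T = S B and B T = S A, then A T† = S† B and B T† = S† A. -/
/-!
The Moore–Penrose inverse of an EP operator is its group inverse: `T T† T = T`, `T† T T† = T†`,
`T T† = T† T`. With `Q = S S†`, the relation `A T = S B` puts `A T†` in the range of `S`, so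
`A T† = Q A T† = S† (S A) T† = S† B T T†`; and `S† B = S†² A T` is fixed by right multiplication
with `T T†`. Swapping `A` and `B` gives the second identity.
-/

structure IsGroupInverse_s16 {M : Type*} [Monoid M] (a b : M) : Prop where
  mul_inv_mul : a * b * a = a
  inv_mul_inv : b * a * b = b
  commute : a * b = b * a

namespace IsGroupInverse_s16

variable {M : Type*} [Monoid M] {a b : M}

theorem mul_inv_mul_mul_s16 (h : IsGroupInverse_s16 a b) (x : M) : a * b * (a * x) = a * x := by
  rw [← mul_assoc, h.mul_inv_mul]

theorem mul_mul_mul_inv (h : IsGroupInverse_s16 a b) (x : M) : x * a * (a * b) = x * a := by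
  rw [h.commute, mul_assoc, ← mul_assoc a, h.mul_inv_mul]

theorem self_mul_inv_mul_inv (h : IsGroupInverse_s16 a b) : a * (b * b) = b := by
  rw [← mul_assoc, h.commute, h.inv_mul_inv]

theorem inv_mul_inv_mul_self (h : IsGroupInverse_s16 a b) : b * (b * a) = b := by
  rw [← h.commute, ← mul_assoc, h.inv_mul_inv]

theorem mul_inv_eq_inv_mul_of_swap {a a' b b' x y : M} (ha : IsGroupInverse_s16 a a')
    (hb : IsGroupInverse_s16 b b') (hxy : x * a = b * y) (hyx : y * a = b * x) :
    x * a' = b' * y := by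
  have hx : x * a' = b * (y * (a' * a')) := by
    rw [← mul_assoc, ← hxy, mul_assoc, ha.self_mul_inv_mul_inv]
  have hy : b' * y = b' * b' * x * a := by
    rw [mul_assoc _ x, hxy, ← mul_assoc, mul_assoc b', hb.inv_mul_inv_mul_self]
  calc x * a' = b * b' * (x * a') := by rw [hx, hb.mul_inv_mul_mul_s16]
    _ = b' * (y * a) * a' := by rw [hb.commute, hyx]; simp only [mul_assoc]
    _ = b' * y * (a * a') := by simp only [mul_assoc]
    _ = b' * y := by rw [hy, ha.mul_mul_mul_inv]

end IsGroupInverse_s16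

theorem stmt_16_general {H : Type*} [NormedAddCommGroup H] [InnerProductSpace ℂ H]
    (T Tdag S Sdag A B : H →L[ℂ] H)
    (hT1 : T ∘L Tdag ∘L T = T) (hT2 : Tdag ∘L T ∘L Tdag = Tdag)
    (hTEP : T ∘L Tdag = Tdag ∘L T)
    (hS1 : S ∘L Sdag ∘L S = S) (hS2 : Sdag ∘L S ∘L Sdag = Sdag)
    (hSEP : S ∘L Sdag = Sdag ∘L S)
    (hc1 : A ∘L T = S ∘L B) (hc2 : B ∘L T = S ∘L A) :
    A ∘L Tdag = Sdag ∘L B ∧ B ∘L Tdag = Sdag ∘L A := by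
  have hT : IsGroupInverse_s16 T Tdag :=
    ⟨(mul_assoc T Tdag T).trans hT1, (mul_assoc Tdag T Tdag).trans hT2, hTEP⟩
  have hS : IsGroupInverse_s16 S Sdag :=
    ⟨(mul_assoc S Sdag S).trans hS1, (mul_assoc Sdag S Sdag).trans hS2, hSEP⟩
  exact ⟨hT.mul_inv_eq_inv_mul_of_swap hS hc1 hc2, hT.mul_inv_eq_inv_mul_of_swap hS hc2 hc1⟩

/-- If `T, S` are EP, `A T = S B` and `B T = S A`, then
`A T† = S† B` and `B T† = S† A`. -/
theorem stmt_16 {H : Type*} [NormedAddCommGroup H] [InnerProductSpace ℂ H]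
    [CompleteSpace H] (T Tdag S Sdag A B : H →L[ℂ] H)
    (hT1 : T ∘L Tdag ∘L T = T) (hT2 : Tdag ∘L T ∘L Tdag = Tdag)
    (hT3 : ContinuousLinearMap.adjoint (T ∘L Tdag) = T ∘L Tdag)
    (hT4 : ContinuousLinearMap.adjoint (Tdag ∘L T) = Tdag ∘L T)
    (hTEP : T ∘L Tdag = Tdag ∘L T)
    (hS1 : S ∘L Sdag ∘L S = S) (hS2 : Sdag ∘L S ∘L Sdag = Sdag)
    (hS3 : ContinuousLinearMap.adjoint (S ∘L Sdag) = S ∘L Sdag)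
    (hS4 : ContinuousLinearMap.adjoint (Sdag ∘L S) = Sdag ∘L S)
    (hSEP : S ∘L Sdag = Sdag ∘L S)
    (hc1 : A ∘L T = S ∘L B) (hc2 : B ∘L T = S ∘L A) :
    A ∘L Tdag = Sdag ∘L B ∧ B ∘L Tdag = Sdag ∘L A :=
  stmt_16_general T Tdag S Sdag A B hT1 hT2 hTEP hS1 hS2 hSEP hc1 hc2
end

section
/- Let S and T be bounded operators on a complex Hilbert space H such that S, T, S T, and T S all have closed ranges and (S T)† = T† S†. Then S T and T S are both EP if and only if S† S T = T S S† and S T T† = T† T S. -/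
/-- `D` is a Moore-Penrose inverse of the bounded operator `X`. -/
def IsMPInv {H : Type*} [NormedAddCommGroup H] [InnerProductSpace ℂ H]
    [CompleteSpace H] (X D : H →L[ℂ] H) : Prop :=
  X ∘L D ∘L X = X ∧ D ∘L X ∘L D = D ∧
    ContinuousLinearMap.adjoint (X ∘L D) = X ∘L D ∧
    ContinuousLinearMap.adjoint (D ∘L X) = D ∘L X

/-!
The argument is purely algebraic and works in any semigroup with involution. For a Moore-Penrose
inverse `d` of `x`, the self-adjoint idempotents `x d` and `d x` are the projections onto the
ranges of `x` and `x*`, so `x` is EP exactly when these ranges agree.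

If `S T` and `T S` are EP, then `T S = S* c` and `S T = c' S*` for some `c, c'`; hence `S† S`
fixes `T S` on the left and `S S†` fixes `S T` on the right, which gives
`S† S T = S† S T S S† = T S S†`. The second identity is the first one for `(T*, S*)`.

Conversely, the two identities make `S T` EP by direct computation, and the reverse-order law
turns `e = T T† S† S` into the self-adjoint element `(T T†)(S† S)(T T†)`, which has the same left
and right ranges as `T S`; therefore `(T S)(T S)† = e = (T S)† (T S)`.
-/

section StarSemigroup

variable {A : Type*} [Semigroup A]

theorem commute_mul_of_intertwine {s sd t td : A} (h₁ : sd * s * t = t * s * sd)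
    (h₂ : s * t * td = td * t * s) : Commute (s * t) (td * sd) :=
  calc s * t * (td * sd) = td * (t * s * sd) := by rw [← mul_assoc, h₂]; simp only [mul_assoc]
    _ = td * sd * (s * t) := by rw [← h₁]; simp only [mul_assoc]

variable [StarMul A]

structure IsMoorePenroseInverse (x d : A) : Prop where
  mul_inv_mul : x * d * x = x
  inv_mul_inv : d * x * d = d
  isSelfAdjoint_mul_inv : IsSelfAdjoint (x * d)
  isSelfAdjoint_inv_mul : IsSelfAdjoint (d * x)

namespace IsMoorePenroseInverse

variable {x d : A}

protected theorem star (h : IsMoorePenroseInverse x d) :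
    IsMoorePenroseInverse (star x) (star d) where
  mul_inv_mul := by simpa only [star_mul, mul_assoc] using congrArg star h.mul_inv_mul
  inv_mul_inv := by simpa only [star_mul, mul_assoc] using congrArg star h.inv_mul_inv
  isSelfAdjoint_mul_inv := by
    rw [← star_mul]; exact IsSelfAdjoint.star_iff.2 h.isSelfAdjoint_inv_mul
  isSelfAdjoint_inv_mul := by
    rw [← star_mul]; exact IsSelfAdjoint.star_iff.2 h.isSelfAdjoint_mul_inv

theorem inv_mul_mul_star (h : IsMoorePenroseInverse x d) : d * x * star x = star x :=
  calc d * x * star x = star (d * x) * star x := by rw [h.isSelfAdjoint_inv_mul.star_eq]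
    _ = star (x * d * x) := by rw [star_mul (x * d), star_mul, star_mul, mul_assoc]
    _ = star x := by rw [h.mul_inv_mul]

theorem star_mul_mul_inv (h : IsMoorePenroseInverse x d) : star x * (x * d) = star x :=
  calc star x * (x * d) = star x * star (x * d) := by rw [h.isSelfAdjoint_mul_inv.star_eq]
    _ = star (x * d * x) := by rw [star_mul, star_mul, star_mul]
    _ = star x := by rw [h.mul_inv_mul]

theorem inv_mul_mul_of_eq_star_mul (h : IsMoorePenroseInverse x d) {y c : A}
    (hy : y = star x * c) : d * x * y = y := by
  rw [hy, ← mul_assoc, h.inv_mul_mul_star]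

theorem mul_mul_inv_of_eq_mul_star (h : IsMoorePenroseInverse x d) {y c : A}
    (hy : y = c * star x) : y * (x * d) = y := by
  rw [hy, mul_assoc, h.star_mul_mul_inv]

theorem exists_eq_star_mul_of_commute (h : IsMoorePenroseInverse x d) (hc : Commute x d) :
    ∃ c, x = star x * c :=
  ⟨star d * x, calc x = d * x * x := by rw [← hc.eq, h.mul_inv_mul]
    _ = star (d * x) * x := by rw [h.isSelfAdjoint_inv_mul.star_eq]
    _ = star x * (star d * x) := by rw [star_mul, mul_assoc]⟩

theorem exists_eq_mul_star_of_commute (h : IsMoorePenroseInverse x d) (hc : Commute x d) :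
    ∃ c, x = c * star x :=
  ⟨x * star d, calc x = x * (x * d) := by rw [hc.eq, ← mul_assoc, h.mul_inv_mul]
    _ = x * star (x * d) := by rw [h.isSelfAdjoint_mul_inv.star_eq]
    _ = x * star d * star x := by rw [star_mul, mul_assoc]⟩

theorem mul_inv_eq (h : IsMoorePenroseInverse x d) {e u : A} (he : IsSelfAdjoint e)
    (hex : e * x = x) (hu : e = x * u) : x * d = e := by
  have hxde : x * d * e = e := by rw [hu, ← mul_assoc, h.mul_inv_mul]
  calc x * d = e * x * d := by rw [hex]
    _ = star (x * d * e) := by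
      rw [star_mul, he.star_eq, h.isSelfAdjoint_mul_inv.star_eq, mul_assoc]
    _ = e := by rw [hxde, he.star_eq]

theorem inv_mul_eq (h : IsMoorePenroseInverse x d) {e v : A} (he : IsSelfAdjoint e)
    (hxe : x * e = x) (hv : e = v * x) : d * x = e := by
  have hedx : e * (d * x) = e := by rw [hv, mul_assoc, ← mul_assoc x, h.mul_inv_mul]
  calc d * x = d * (x * e) := by rw [hxe]
    _ = star (e * (d * x)) := by
      rw [star_mul, he.star_eq, h.isSelfAdjoint_inv_mul.star_eq, mul_assoc]
    _ = e := by rw [hedx, he.star_eq]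

theorem commute_of_isSelfAdjoint (h : IsMoorePenroseInverse x d) {e u v : A}
    (he : IsSelfAdjoint e) (hex : e * x = x) (hxe : x * e = x) (hu : e = x * u)
    (hv : e = v * x) : Commute x d :=
  (h.mul_inv_eq he hex hu).trans (h.inv_mul_eq he hxe hv).symm

end IsMoorePenroseInverse

variable {s sd t td e f : A}

theorem inv_mul_mul_eq_mul_mul_inv_of_commute (hs : IsMoorePenroseInverse s sd)
    (hst : IsMoorePenroseInverse (s * t) e) (hts : IsMoorePenroseInverse (t * s) f)
    (hst_ep : Commute (s * t) e) (hts_ep : Commute (t * s) f) :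
    sd * s * t = t * s * sd := by
  obtain ⟨c, hc⟩ := hst.exists_eq_mul_star_of_commute hst_ep
  obtain ⟨c', hc'⟩ := hts.exists_eq_star_mul_of_commute hts_ep
  have hst_right : s * t * (s * sd) = s * t :=
    hs.mul_mul_inv_of_eq_mul_star (c := c * star t) (by rw [hc, star_mul, mul_assoc])
  have hts_left : sd * s * (t * s) = t * s :=
    hs.inv_mul_mul_of_eq_star_mul (c := star t * c') (by rw [hc', star_mul, mul_assoc])
  calc sd * s * t = sd * (s * t * (s * sd)) := by rw [hst_right, mul_assoc]
    _ = sd * s * (t * s) * sd := by simp only [mul_assoc]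
    _ = t * s * sd := by rw [hts_left]

theorem mul_mul_inv_eq_inv_mul_mul_of_commute (ht : IsMoorePenroseInverse t td)
    (hst : IsMoorePenroseInverse (s * t) e) (hts : IsMoorePenroseInverse (t * s) f)
    (hst_ep : Commute (s * t) e) (hts_ep : Commute (t * s) f) :
    s * t * td = td * t * s := by
  have hst' : IsMoorePenroseInverse (star s * star t) (star f) := by
    rw [← star_mul]; exact hts.star
  have hts' : IsMoorePenroseInverse (star t * star s) (star e) := by
    rw [← star_mul]; exact hst.star
  have h := inv_mul_mul_eq_mul_mul_inv_of_commute ht.star hts' hst'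
    (by rw [← star_mul]; exact hst_ep.star_star) (by rw [← star_mul]; exact hts_ep.star_star)
  simpa only [star_mul, star_star, mul_assoc] using congrArg star h

theorem commute_mul_swap_of_intertwine (hs : IsMoorePenroseInverse s sd)
    (ht : IsMoorePenroseInverse t td) (hst : IsMoorePenroseInverse (s * t) (td * sd))
    (hts : IsMoorePenroseInverse (t * s) f) (h₁ : sd * s * t = t * s * sd)
    (h₂ : s * t * td = td * t * s) : Commute (t * s) f := by
  have hexpand : t * td * (sd * s) = t * td * (sd * s * t) * (td * sd * s) := by
    calc t * td * (sd * s) = t * (td * sd) * s := by simp only [mul_assoc]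
      _ = t * (td * sd * (s * t) * (td * sd)) * s := by rw [hst.inv_mul_inv]
      _ = t * td * (sd * s * t) * (td * sd * s) := by simp only [mul_assoc]
  have hu : t * td * (sd * s) = t * s * (sd * (td * sd * s)) := by
    rw [hexpand, h₁]
    calc t * td * (t * s * sd) * (td * sd * s) = t * td * t * (s * (sd * (td * sd * s))) := by
          simp only [mul_assoc]
      _ = t * s * (sd * (td * sd * s)) := by rw [ht.mul_inv_mul]; simp only [mul_assoc]
  have hv : t * td * (sd * s) = t * td * sd * td * (t * s) := by
    calc t * td * (sd * s) = t * td * sd * (s * t * td) * (sd * s) := by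
          rw [hexpand]; simp only [mul_assoc]
      _ = t * td * sd * td * t * (s * sd * s) := by rw [h₂]; simp only [mul_assoc]
      _ = t * td * sd * td * (t * s) := by rw [hs.mul_inv_mul]; simp only [mul_assoc]
  have he : IsSelfAdjoint (t * td * (sd * s)) := by
    have hsandwich : t * td * (sd * s) = t * td * (sd * s) * (t * td) := by
      calc t * td * (sd * s) = t * td * sd * (td * t * s) := by rw [hv]; simp only [mul_assoc]
        _ = t * td * (sd * s) * (t * td) := by rw [← h₂]; simp only [mul_assoc]
    rw [hsandwich]
    exact hs.isSelfAdjoint_inv_mul.conjugate_self ht.isSelfAdjoint_mul_inv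
  refine hts.commute_of_isSelfAdjoint he ?_ ?_ hu hv
  · calc t * td * (sd * s) * (t * s) = t * td * (sd * s * t) * s := by simp only [mul_assoc]
      _ = t * td * t * (s * sd * s) := by rw [h₁]; simp only [mul_assoc]
      _ = t * s := by rw [ht.mul_inv_mul, hs.mul_inv_mul]
  · calc t * s * (t * td * (sd * s)) = t * (s * t * td) * (sd * s) := by simp only [mul_assoc]
      _ = t * td * t * (s * sd * s) := by rw [h₂]; simp only [mul_assoc]
      _ = t * s := by rw [ht.mul_inv_mul, hs.mul_inv_mul]

theorem commute_and_commute_iff_intertwine (hs : IsMoorePenroseInverse s sd)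
    (ht : IsMoorePenroseInverse t td) (hst : IsMoorePenroseInverse (s * t) (td * sd))
    (hts : IsMoorePenroseInverse (t * s) f) :
    Commute (s * t) (td * sd) ∧ Commute (t * s) f ↔
      sd * s * t = t * s * sd ∧ s * t * td = td * t * s :=
  ⟨fun ⟨hst_ep, hts_ep⟩ => ⟨inv_mul_mul_eq_mul_mul_inv_of_commute hs hst hts hst_ep hts_ep,
      mul_mul_inv_eq_inv_mul_mul_of_commute ht hst hts hst_ep hts_ep⟩,
    fun ⟨h₁, h₂⟩ => ⟨commute_mul_of_intertwine h₁ h₂,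
      commute_mul_swap_of_intertwine hs ht hst hts h₁ h₂⟩⟩

end StarSemigroup

theorem IsMPInv.isMoorePenroseInverse {H : Type*} [NormedAddCommGroup H]
    [InnerProductSpace ℂ H] [CompleteSpace H] {X D : H →L[ℂ] H} (h : IsMPInv X D) :
    IsMoorePenroseInverse X D :=
  ⟨h.1, h.2.1, h.2.2.1, h.2.2.2⟩

/-- If `S, T, S T, T S` all have Moore-Penrose inverses and the
reverse-order law `(S T)† = T† S†` holds, then `S T` and `T S` are both EP iff
`S† S T = T S S†` and `S T T† = T† T S`. -/
theorem stmt_17 {H : Type*} [NormedAddCommGroup H] [InnerProductSpace ℂ H]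
    [CompleteSpace H] (S Sdag T Tdag STdag TSdag : H →L[ℂ] H)
    (hS : IsMPInv S Sdag) (hT : IsMPInv T Tdag)
    (hST : IsMPInv (S ∘L T) STdag) (hTS : IsMPInv (T ∘L S) TSdag)
    (hrev : STdag = Tdag ∘L Sdag) :
    ((S ∘L T) ∘L STdag = STdag ∘L (S ∘L T) ∧
      (T ∘L S) ∘L TSdag = TSdag ∘L (T ∘L S)) ↔
    (Sdag ∘L S ∘L T = T ∘L S ∘L Sdag ∧
      S ∘L T ∘L Tdag = Tdag ∘L T ∘L S) := by
  subst hrev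
  have key := commute_and_commute_iff_intertwine hS.isMoorePenroseInverse
    hT.isMoorePenroseInverse hST.isMoorePenroseInverse hTS.isMoorePenroseInverse
  simp only [commute_iff_eq, mul_assoc] at key
  exact key
end

section
/- Let S and T be EP operators on a complex Hilbert space H. Then the range of S T is closed if and only if the range of T S is closed. -/
/-!
Write `ran` for ranges. Since `ran (T S) = T (ran S)` and `T` has closed range, the open mapping
theorem makes `T` a quotient map onto `ran T`, so `T (ran S)` is closed iff its preimage
`ran S + ker T` is. For EP operators `ker T = (ran T*)ᗮ = (ran T)ᗮ = ker T*`, so the same holds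
for `T* (ran S) = T* (ran S*) = ran (S T)*`, and by the closed range theorem this is closed iff
`ran (S T)` is.
-/

open ContinuousLinearMap Function

section Banach

variable {𝕜 E F : Type*} [NontriviallyNormedField 𝕜]
  [NormedAddCommGroup E] [NormedSpace 𝕜 E] [CompleteSpace E]
  [NormedAddCommGroup F] [NormedSpace 𝕜 F] [CompleteSpace F]

theorem ContinuousLinearMap.isClosed_map_iff_isClosed_sup_ker {f : E →L[𝕜] F}
    (hf : IsClosed (f.range : Set F)) (M : Submodule 𝕜 E) :
    IsClosed (M.map (f : E →ₗ[𝕜] F) : Set F) ↔ IsClosed (↑(M ⊔ f.ker) : Set E) := by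
  have := hf.completeSpace_coe
  have hq := f.rangeRestrict.isQuotientMap (LinearMap.surjective_rangeRestrict f.toLinearMap)
  have hsub : (M.map (f : E →ₗ[𝕜] F) : Set F) ⊆ Set.range ((↑) : f.range → F) := by
    rintro _ ⟨x, -, rfl⟩
    exact ⟨⟨f x, x, rfl⟩, rfl⟩
  rw [← Submodule.comap_map_eq, Submodule.comap_coe,
    hf.isClosedEmbedding_subtypeVal.isClosed_iff_preimage_isClosed hsub,
    ← hq.isCoinducing.isClosed_preimage]
  rfl

end Banach

section Hilbert

variable {𝕜 E F : Type*} [RCLike 𝕜]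
  [NormedAddCommGroup E] [InnerProductSpace 𝕜 E] [CompleteSpace E]
  [NormedAddCommGroup F] [InnerProductSpace 𝕜 F] [CompleteSpace F]

theorem ContinuousLinearMap.antilipschitz_adjoint_of_surjective {A : E →L[𝕜] F}
    (hA : Surjective A) : ∃ K, AntilipschitzWith K (adjoint A) := by
  obtain ⟨C, hC, hpre⟩ := A.exists_preimage_norm_le hA
  refine ⟨⟨C, hC.le⟩, (adjoint A).antilipschitz_of_bound fun y => ?_⟩
  obtain ⟨x, rfl, hx⟩ := hpre y
  have hsq : ‖A x‖ * ‖A x‖ ≤ C * ‖adjoint A (A x)‖ * ‖A x‖ := calc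
    ‖A x‖ * ‖A x‖ = RCLike.re (inner 𝕜 (adjoint A (A x)) x) := by
      rw [adjoint_inner_left, inner_self_eq_norm_mul_norm]
    _ ≤ ‖adjoint A (A x)‖ * ‖x‖ := (RCLike.re_le_norm _).trans (norm_inner_le_norm _ _)
    _ ≤ ‖adjoint A (A x)‖ * (C * ‖A x‖) := by gcongr
    _ = C * ‖adjoint A (A x)‖ * ‖A x‖ := by ring
  rcases (norm_nonneg (A x)).eq_or_lt with h | h
  · rw [← h]
    positivity
  · exact le_of_mul_le_mul_right hsq h

theorem ContinuousLinearMap.isClosed_range_adjoint {A : E →L[𝕜] F}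
    (hA : IsClosed (A.range : Set F)) : IsClosed ((adjoint A).range : Set E) := by
  have := hA.completeSpace_coe
  obtain ⟨K, hK⟩ := antilipschitz_adjoint_of_surjective (A := A.rangeRestrict)
    (LinearMap.surjective_rangeRestrict A.toLinearMap)
  have hA_eq : adjoint A = adjoint A.rangeRestrict ∘L A.range.orthogonalProjectionOnto := by
    rw [← Submodule.adjoint_subtypeL, ← adjoint_comp]
    rfl
  have hrange : (adjoint A).range = (adjoint A.rangeRestrict).range := by
    rw [hA_eq]
    exact LinearMap.range_comp_of_range_eq_top _ <| LinearMap.range_eq_top.2 fun v =>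
      ⟨v, A.range.orthogonalProjectionOnto_mem_subspace_eq_self v⟩
  rw [hrange]
  exact hK.isClosed_range (adjoint _).uniformContinuous

theorem ContinuousLinearMap.isClosed_range_adjoint_iff {A : E →L[𝕜] F} :
    IsClosed ((adjoint A).range : Set E) ↔ IsClosed (A.range : Set F) :=
  ⟨fun h => by simpa using isClosed_range_adjoint h, isClosed_range_adjoint⟩

theorem ContinuousLinearMap.ker_adjoint_eq_ker_of_range_eq_range_adjoint {A : E →L[𝕜] E}
    (hA : A.range = (adjoint A).range) : (adjoint A).ker = A.ker := by
  rw [← orthogonal_range, hA, orthogonal_range, adjoint_adjoint]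

theorem ContinuousLinearMap.isClosed_map_iff_isClosed_map_adjoint {A : E →L[𝕜] E}
    (hA : IsClosed (A.range : Set E)) (hEP : A.range = (adjoint A).range) (M : Submodule 𝕜 E) :
    IsClosed (M.map (A : E →ₗ[𝕜] E) : Set E) ↔
      IsClosed (M.map (adjoint A : E →ₗ[𝕜] E) : Set E) := by
  rw [isClosed_map_iff_isClosed_sup_ker hA, isClosed_map_iff_isClosed_sup_ker (hEP ▸ hA),
    ker_adjoint_eq_ker_of_range_eq_range_adjoint hEP]

end Hilbert

theorem stmt_19_general {H : Type*} [NormedAddCommGroup H] [InnerProductSpace ℂ H]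
    [CompleteSpace H] (S T : H →L[ℂ] H)
    (hTclosed : IsClosed (LinearMap.range (T : H →ₗ[ℂ] H) : Set H))
    (hSEP : LinearMap.range (S : H →ₗ[ℂ] H) = LinearMap.range ((ContinuousLinearMap.adjoint S : H →L[ℂ] H) : H →ₗ[ℂ] H))
    (hTEP : LinearMap.range (T : H →ₗ[ℂ] H) = LinearMap.range ((ContinuousLinearMap.adjoint T : H →L[ℂ] H) : H →ₗ[ℂ] H)) :
    IsClosed (LinearMap.range ((S ∘L T : H →L[ℂ] H) : H →ₗ[ℂ] H) : Set H) ↔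
      IsClosed (LinearMap.range ((T ∘L S : H →L[ℂ] H) : H →ₗ[ℂ] H) : Set H) := by
  calc IsClosed ((S ∘L T).range : Set H)
      ↔ IsClosed ((adjoint (S ∘L T)).range : Set H) := isClosed_range_adjoint_iff.symm
    _ ↔ IsClosed (S.range.map (adjoint T : H →ₗ[ℂ] H) : Set H) := by
      rw [adjoint_comp, toLinearMap_comp, LinearMap.range_comp, ← hSEP]
    _ ↔ IsClosed (S.range.map (T : H →ₗ[ℂ] H) : Set H) :=
      (isClosed_map_iff_isClosed_map_adjoint hTclosed hTEP _).symm
    _ ↔ IsClosed ((T ∘L S).range : Set H) := by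
      rw [toLinearMap_comp, LinearMap.range_comp]

/-- STATEMENT 19: For EP operators `S, T` on a complex Hilbert space, the range of
`S T` is closed iff the range of `T S` is closed. -/
theorem stmt_19 {H : Type*} [NormedAddCommGroup H] [InnerProductSpace ℂ H]
    [CompleteSpace H] (S T : H →L[ℂ] H)
    (hSclosed : IsClosed (LinearMap.range (S : H →ₗ[ℂ] H) : Set H))
    (hTclosed : IsClosed (LinearMap.range (T : H →ₗ[ℂ] H) : Set H))
    (hSEP : LinearMap.range (S : H →ₗ[ℂ] H) = LinearMap.range ((ContinuousLinearMap.adjoint S : H →L[ℂ] H) : H →ₗ[ℂ] H))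
    (hTEP : LinearMap.range (T : H →ₗ[ℂ] H) = LinearMap.range ((ContinuousLinearMap.adjoint T : H →L[ℂ] H) : H →ₗ[ℂ] H)) :
    IsClosed (LinearMap.range ((S ∘L T : H →L[ℂ] H) : H →ₗ[ℂ] H) : Set H) ↔
      IsClosed (LinearMap.range ((T ∘L S : H →L[ℂ] H) : H →ₗ[ℂ] H) : Set H) :=
  stmt_19_general S T hTclosed hSEP hTEP
end
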